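/- Let f be an L²-martingale with ‖f‖_{BMO^α} < ∞ and τ a stopping time. Then P(τ<∞)^{-1-2α} ∫_{τ<∞} |f - f_{τ-1}|² dP ≤ ‖f‖²_{BMO^α}, where ‖f‖_{BMO^α} = sup_{n≥0} sup_{A∈F_n} P(A)^{-1/2-α} (∫_A |f-f_{n-1}|² dP)^{1/2}. -/

import Mathlib

/-! Split `{τ < ∞}` into the `ℱ n`-measurable pieces `{τ = n}`. On each piece the definition of the
`BMO^α` norm gives `∫_{τ = n} |g - f_{n-1}|² ≤ ‖f‖² P(τ = n)^{1+2α}`, and since `1 + 2α ≥ 1` the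
map `t ↦ t^{1+2α}` is superadditive, so the pieces sum to at most `‖f‖² P(τ < ∞)^{1+2α}`. -/

open MeasureTheory ENNReal Set
open scoped Classical NNReal

noncomputable section

/-- Convention `f_{-1} = 0`: the value `f_{n-1}`. -/
def predVal {Ω : Type*} (f : ℕ → Ω → ℝ) (n : ℕ) (ω : Ω) : ℝ :=
  if n = 0 then 0 else f (n - 1) ω

/-- Martingale difference `d_k f` (with `f_{-1} = 0`). -/
def mdiff {Ω : Type*} (f : ℕ → Ω → ℝ) (k : ℕ) (ω : Ω) : ℝ :=
  if k = 0 then f 0 ω else f k ω - f (k - 1) ω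

/-- The `BMO^α` norm of the martingale `f` with final value `g`:
`sup_n sup_{A ∈ F_n} P(A)^{-1/2-α} (∫_A |g - f_{n-1}|² dP)^{1/2}`. -/
def bmoNorm {Ω : Type*} {m0 : MeasurableSpace Ω} (μ : Measure Ω)
    (ℱ : Filtration ℕ m0) (α : ℝ) (f : ℕ → Ω → ℝ) (g : Ω → ℝ) : ℝ≥0∞ :=
  ⨆ (n : ℕ) (A : Set Ω) (_ : MeasurableSet[ℱ n] A),
    (∫⁻ ω in A, (‖g ω - predVal f n ω‖₊ : ℝ≥0∞) ^ 2 ∂μ) ^ (1/2 : ℝ)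
      / μ A ^ (1/2 + α : ℝ)

/-- Stopping time with values in `ℕ ∪ {∞}`. -/
def IsStopTime {Ω : Type*} {m0 : MeasurableSpace Ω} (ℱ : Filtration ℕ m0)
    (τ : Ω → ℕ∞) : Prop :=
  ∀ n : ℕ, MeasurableSet[ℱ n] {ω | τ ω ≤ (n : ℕ∞)}

/-- Mass of the tent over `τ` for the measure `w_k dP ⊗ dm`:
`∫_Ω Σ_{k ≥ τ} w_k 1_{τ < ∞} dP`. -/
def tentMass {Ω : Type*} [MeasurableSpace Ω] (μ : Measure Ω)
    (w : ℕ → Ω → ℝ≥0∞) (τ : Ω → ℕ∞) : ℝ≥0∞ :=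
  ∫⁻ ω, ∑' k : ℕ, if τ ω ≤ (k : ℕ∞) ∧ τ ω < ⊤ then w k ω else 0 ∂μ

/-- The `α`-Carleson norm of the measure `w_k dP ⊗ dm`:
`sup_τ μ(τ̂)/P(τ<∞)^{1+2α}`. -/
def carlesonNorm {Ω : Type*} {m0 : MeasurableSpace Ω} (μ : Measure Ω)
    (ℱ : Filtration ℕ m0) (α : ℝ) (w : ℕ → Ω → ℝ≥0∞) : ℝ≥0∞ :=
  ⨆ (τ : Ω → ℕ∞) (_ : IsStopTime ℱ τ),
    tentMass μ w τ / μ {ω | τ ω < ⊤} ^ (1 + 2*α : ℝ)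

namespace ENNReal

theorem sum_rpow_le_rpow_sum {ι : Type*} (s : Finset ι) (a : ι → ℝ≥0∞) {p : ℝ} (hp : 1 ≤ p) :
    ∑ i ∈ s, a i ^ p ≤ (∑ i ∈ s, a i) ^ p := by
  induction s using Finset.induction_on with
  | empty => simp [zero_rpow_of_pos (zero_lt_one.trans_le hp)]
  | insert i s hi ih =>
    rw [Finset.sum_insert hi, Finset.sum_insert hi]
    exact (add_le_add_right ih _).trans (add_rpow_le_rpow_add _ _ hp)

theorem tsum_rpow_le_rpow_tsum {ι : Type*} (a : ι → ℝ≥0∞) {p : ℝ} (hp : 1 ≤ p) :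
    ∑' i, a i ^ p ≤ (∑' i, a i) ^ p := by
  rw [ENNReal.tsum_eq_iSup_sum]
  exact iSup_le fun s => (sum_rpow_le_rpow_sum s a hp).trans
    (rpow_le_rpow (ENNReal.sum_le_tsum s) (zero_le_one.trans hp))

end ENNReal

theorem IsStopTime.measurableSet_eq {Ω : Type*} {m0 : MeasurableSpace Ω} {ℱ : Filtration ℕ m0}
    {τ : Ω → ℕ∞} (hτ : IsStopTime ℱ τ) (n : ℕ) : MeasurableSet[ℱ n] {ω | τ ω = n} :=
  IsStoppingTime.measurableSet_eq (f := ℱ) hτ n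

theorem setOf_lt_top_eq_iUnion {Ω : Type*} (τ : Ω → ℕ∞) :
    {ω | τ ω < ⊤} = ⋃ n : ℕ, {ω | τ ω = n} := by
  ext ω
  simp [lt_top_iff_ne_top, ENat.ne_top_iff_exists, eq_comm]

theorem pairwise_disjoint_setOf_eq {Ω : Type*} (τ : Ω → ℕ∞) :
    Pairwise (Function.onFun Disjoint fun n : ℕ => {ω | τ ω = n}) :=
  (pairwise_disjoint_fiber τ).comp_of_injective Nat.cast_injective

theorem setLIntegral_lt_top_eq_tsum {Ω : Type*} [MeasurableSpace Ω] (μ : Measure Ω)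
    {τ : Ω → ℕ∞} (hτ : ∀ n : ℕ, MeasurableSet {ω | τ ω = n}) (F : ℕ → Ω → ℝ≥0∞) :
    ∫⁻ ω in {ω | τ ω < ⊤}, F (τ ω).toNat ω ∂μ = ∑' n : ℕ, ∫⁻ ω in {ω | τ ω = n}, F n ω ∂μ := by
  rw [setOf_lt_top_eq_iUnion, lintegral_iUnion hτ (pairwise_disjoint_setOf_eq τ)]
  refine tsum_congr fun n => setLIntegral_congr_fun (hτ n) fun ω (hω : τ ω = n) => ?_
  rw [hω, ENat.toNat_natCast]

theorem measure_lt_top_eq_tsum {Ω : Type*} [MeasurableSpace Ω] (μ : Measure Ω)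
    {τ : Ω → ℕ∞} (hτ : ∀ n : ℕ, MeasurableSet {ω | τ ω = n}) :
    μ {ω | τ ω < ⊤} = ∑' n : ℕ, μ {ω | τ ω = n} := by
  rw [setOf_lt_top_eq_iUnion, measure_iUnion (pairwise_disjoint_setOf_eq τ) hτ]

theorem setLIntegral_sq_le_bmoNorm_sq_mul {Ω : Type*} {m0 : MeasurableSpace Ω} (μ : Measure Ω)
    [IsFiniteMeasure μ] (ℱ : Filtration ℕ m0) (α : ℝ) (f : ℕ → Ω → ℝ) (g : Ω → ℝ)
    {n : ℕ} {A : Set Ω} (hA : MeasurableSet[ℱ n] A) :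
    ∫⁻ ω in A, (‖g ω - predVal f n ω‖₊ : ℝ≥0∞) ^ 2 ∂μ
      ≤ bmoNorm μ ℱ α f g ^ 2 * μ A ^ (1 + 2 * α : ℝ) := by
  set X := ∫⁻ ω in A, (‖g ω - predVal f n ω‖₊ : ℝ≥0∞) ^ 2 ∂μ
  rcases eq_or_ne (μ A) 0 with h0 | h0
  · simp [X, Measure.restrict_eq_zero.mpr h0]
  have hX : X ^ (1 / 2 : ℝ) ≤ bmoNorm μ ℱ α f g * μ A ^ (1 / 2 + α : ℝ) := by
    have hfin : μ A ≠ ⊤ := measure_ne_top μ A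
    refine (ENNReal.div_le_iff (rpow_pos (pos_iff_ne_zero.2 h0) hfin).ne'
      (rpow_ne_top_of_ne_zero h0 hfin)).mp ?_
    exact le_iSup₂_of_le n A (le_iSup_of_le hA le_rfl)
  calc X = (X ^ (1 / 2 : ℝ)) ^ 2 := by
        rw [← rpow_natCast, ← rpow_mul]; norm_num
    _ ≤ (bmoNorm μ ℱ α f g * μ A ^ (1 / 2 + α : ℝ)) ^ 2 := by gcongr
    _ = bmoNorm μ ℱ α f g ^ 2 * μ A ^ (1 + 2 * α : ℝ) := by
        rw [mul_pow, ← rpow_natCast (μ A ^ _), ← rpow_mul]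
        congr 2
        push_cast
        ring

theorem stmt1_general {Ω : Type*} {m0 : MeasurableSpace Ω} (μ : Measure Ω)
    [IsProbabilityMeasure μ] (ℱ : Filtration ℕ m0)
    (α : ℝ) (hα0 : 0 ≤ α)
    (f : ℕ → Ω → ℝ) (g : Ω → ℝ)
    (τ : Ω → ℕ∞) (hτ : IsStopTime ℱ τ) :
    (∫⁻ ω in {ω | τ ω < ⊤}, (‖g ω - predVal f (τ ω).toNat ω‖₊ : ℝ≥0∞) ^ 2 ∂μ)
        / μ {ω | τ ω < ⊤} ^ (1 + 2*α : ℝ)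
      ≤ bmoNorm μ ℱ α f g ^ 2 := by
  have hτm : ∀ n : ℕ, MeasurableSet {ω | τ ω = n} := fun n => ℱ.le n _ (hτ.measurableSet_eq n)
  refine ENNReal.div_le_of_le_mul ?_
  rw [setLIntegral_lt_top_eq_tsum μ hτm fun n ω => (‖g ω - predVal f n ω‖₊ : ℝ≥0∞) ^ 2,
    measure_lt_top_eq_tsum μ hτm]
  calc ∑' n : ℕ, ∫⁻ ω in {ω | τ ω = n}, (‖g ω - predVal f n ω‖₊ : ℝ≥0∞) ^ 2 ∂μ
      ≤ ∑' n : ℕ, bmoNorm μ ℱ α f g ^ 2 * μ {ω | τ ω = n} ^ (1 + 2 * α : ℝ) :=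
        ENNReal.tsum_le_tsum fun n =>
          setLIntegral_sq_le_bmoNorm_sq_mul μ ℱ α f g (hτ.measurableSet_eq n)
    _ = bmoNorm μ ℱ α f g ^ 2 * ∑' n : ℕ, μ {ω | τ ω = n} ^ (1 + 2 * α : ℝ) :=
        ENNReal.tsum_mul_left
    _ ≤ bmoNorm μ ℱ α f g ^ 2 * (∑' n : ℕ, μ {ω | τ ω = n}) ^ (1 + 2 * α : ℝ) := by
        gcongr
        exact ENNReal.tsum_rpow_le_rpow_tsum _ (by linarith)

/-- for an `L²`-martingale `f` with `‖f‖_{BMO^α} < ∞` and a stopping time `τ`,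
`P(τ<∞)^{-1-2α} ∫_{τ<∞} |f - f_{τ-1}|² dP ≤ ‖f‖²_{BMO^α}`. -/
theorem stmt1 {Ω : Type*} {m0 : MeasurableSpace Ω} (μ : Measure Ω)
    [IsProbabilityMeasure μ] (ℱ : Filtration ℕ m0)
    (α : ℝ) (hα0 : 0 ≤ α) (hα1 : α ≤ 1)
    (f : ℕ → Ω → ℝ) (g : Ω → ℝ) (hf : Martingale f ℱ μ) (hg : MemLp g 2 μ)
    (hfg : ∀ n, f n =ᵐ[μ] μ[g | ℱ n])
    (hbmo : bmoNorm μ ℱ α f g < ⊤)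
    (τ : Ω → ℕ∞) (hτ : IsStopTime ℱ τ) :
    (∫⁻ ω in {ω | τ ω < ⊤}, (‖g ω - predVal f (τ ω).toNat ω‖₊ : ℝ≥0∞) ^ 2 ∂μ)
        / μ {ω | τ ω < ⊤} ^ (1 + 2*α : ℝ)
      ≤ bmoNorm μ ℱ α f g ^ 2 :=
  stmt1_general μ ℱ α hα0 f g τ hτ
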